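/- arXiv:1706.08565 — 5 statements merged into one kernel-verified Lean document; each statement's English description precedes it below -/
import Mathlib

section
/- Let {P_θ : θ ∈ Θ} be a family of probability measures on a measurable space 𝒳, let α ∈ [0,1], and let Γ : 𝒳 → 𝒫(Θ) satisfy P_θ({x : θ ∈ Γ(x)}) ≥ 1 − α. Define the belief function Bel_x(A) = 1 − α if Γ(x) ⊆ A and Bel_x(A) = 0 otherwise. Then this belief function satisfies the Martin–Liu validity criterion at θ: for every β ∈ [0,1] and every A ⊆ Θ with θ ∉ A (assuming the relevant events are measurable), P_θ({x : Bel_x(A) ≥ 1 − β}) ≤ β. -/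
open MeasureTheory

/-- The natural belief assignment of a `(1 - α)`-confidence region procedure `Γ`
(belief `1 - α` to supersets of `Γ(x)`, belief `0` otherwise) satisfies the
Martin–Liu validity criterion at the true parameter value `θ`: for every `β ∈ [0,1]`
and every false proposition `A` (with `θ ∉ A`), the sampling probability that `A` is
assigned belief at least `1 - β` is at most `β`. -/
theorem confidence_region_martin_liu_valid
    {Θ 𝒳 : Type*} [MeasurableSpace 𝒳]
    (P : Θ → Measure 𝒳) (hP : ∀ θ, IsProbabilityMeasure (P θ))
    (α : ℝ) (hα : α ∈ Set.Icc (0:ℝ) 1)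
    (Γ : 𝒳 → Set Θ) (θ : Θ)
    (hcov_meas : MeasurableSet {x | θ ∈ Γ x})
    (hcov : ENNReal.ofReal (1 - α) ≤ P θ {x | θ ∈ Γ x})
    (Bel : 𝒳 → Set Θ → ℝ)
    (hBel_in : ∀ x A, Γ x ⊆ A → Bel x A = 1 - α)
    (hBel_out : ∀ x A, ¬ Γ x ⊆ A → Bel x A = 0)
    (β : ℝ) (hβ : β ∈ Set.Icc (0:ℝ) 1)
    (A : Set Θ) (hA : θ ∉ A)
    (hmeas : MeasurableSet {x | 1 - β ≤ Bel x A}) :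
    P θ {x | 1 - β ≤ Bel x A} ≤ ENNReal.ofReal β := by
  obtain ⟨hβ0, hβ1⟩ := hβ
  obtain ⟨hα0, hα1⟩ := hα
  have hprob := hP θ
  by_cases hb : 1 - β ≤ 0
  · have : β = 1 := le_antisymm hβ1 (by linarith)
    subst this
    calc P θ {x | 1 - 1 ≤ Bel x A} ≤ 1 := prob_le_one
      _ = ENNReal.ofReal 1 := by simp
  · push_neg at hb
    rcases Set.eq_empty_or_nonempty {x | 1 - β ≤ Bel x A} with he | ⟨x₀, hx₀⟩
    · rw [he]; simp
    · -- from witness: Bel x₀ A ≥ 1-β > 0, so Γ x₀ ⊆ A and Bel x₀ A = 1-α, hence α ≤ β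
      have hsub0 : Γ x₀ ⊆ A := by
        by_contra h
        have := hBel_out x₀ A h
        simp only [Set.mem_setOf_eq] at hx₀
        linarith
      have hαβ : α ≤ β := by
        have := hBel_in x₀ A hsub0
        simp only [Set.mem_setOf_eq] at hx₀
        linarith
      have hsubset : {x | 1 - β ≤ Bel x A} ⊆ {x | θ ∈ Γ x}ᶜ := by
        intro x hx
        simp only [Set.mem_setOf_eq] at hx
        intro hmem
        have hns : ¬ Γ x ⊆ A := fun hs => hA (hs hmem)
        have := hBel_out x A hns
        linarith
      calc P θ {x | 1 - β ≤ Bel x A} ≤ P θ {x | θ ∈ Γ x}ᶜ :=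
            measure_mono hsubset
        _ = 1 - P θ {x | θ ∈ Γ x} := by
            rw [measure_compl hcov_meas (measure_ne_top _ _), measure_univ]
        _ ≤ 1 - ENNReal.ofReal (1 - α) := by
            exact tsub_le_tsub_left hcov _
        _ = ENNReal.ofReal α := by
            rw [ENNReal.sub_eq_of_eq_add (by simp)]
            rw [← ENNReal.ofReal_one, ← ENNReal.ofReal_add hα0 (by linarith)]
            norm_num
        _ ≤ ENNReal.ofReal β := ENNReal.ofReal_le_ofReal hαβ
end

section
/- For D ≥ 0, S > 0, R > 0, define Pc(D,S,R) as the probability assigned to the closed disk {(x,y) ∈ ℝ² : x² + y² ≤ R²} by the bivariate normal distribution with mean (D,0) and covariance S²·I₂. Then for every D ≥ 0, Pc(D,S,R) ≤ Pc(0,S,R) = 1 − exp(−R²/(2S²)). That is, for fixed uncertainty S and combined radius R, the maximum epistemic probability of collision over all estimated miss distances is attained at D = 0. -/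
open MeasureTheory ProbabilityTheory Set Real
open scoped NNReal ENNReal

namespace PcAux

variable {v : ℝ≥0}

variable {v : ℝ≥0}

/-- gaussian pdf is larger closer to the mean -/
lemma pdf_mono (v : ℝ≥0) {x y : ℝ} (h : y ^ 2 ≤ x ^ 2) :
    gaussianPDF 0 v x ≤ gaussianPDF 0 v y := by
  rcases eq_or_ne v 0 with rfl | hv
  · simp [gaussianPDF_zero_var]
  · have hv' : (0:ℝ) < v := by positivity
    simp only [gaussianPDF_def, gaussianPDFReal, sub_zero]
    apply ENNReal.ofReal_le_ofReal
    apply mul_le_mul_of_nonneg_left _ (by positivity)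
    apply Real.exp_le_exp.mpr
    apply div_le_div_of_nonneg_right _ (by positivity)
    linarith

lemma shift_le (hv : v ≠ 0) {a D : ℝ} (ha : 0 ≤ a) (hD : 0 ≤ D) :
    gaussianReal 0 v (Icc (-a - D) (a - D)) ≤ gaussianReal 0 v (Icc (-a) a) := by
  have hm := measurable_gaussianPDF 0 v
  rw [gaussianReal_apply 0 hv _, gaussianReal_apply 0 hv _]
  rw [setLIntegral_congr (Ioc_ae_eq_Icc (μ := volume)).symm,
    setLIntegral_congr (Ioc_ae_eq_Icc (μ := volume) (a := -a) (b := a)).symm]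
  set f := gaussianPDF 0 v with hf
  set fa := gaussianPDF 0 v a with hfa
  rcases le_total D (2 * a) with hD2 | hD2
  · have h1 : -a - D ≤ -a := by linarith
    have h2 : -a ≤ a - D := by linarith
    have h3 : a - D ≤ a := by linarith
    rw [← Ioc_union_Ioc_eq_Ioc h1 h2, ← Ioc_union_Ioc_eq_Ioc h2 h3,
      lintegral_union measurableSet_Ioc (Ioc_disjoint_Ioc_of_le le_rfl),
      lintegral_union measurableSet_Ioc (Ioc_disjoint_Ioc_of_le le_rfl)]
    have key : ∫⁻ x in Ioc (-a - D) (-a), f x ≤ ∫⁻ x in Ioc (a - D) a, f x := by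
      calc ∫⁻ x in Ioc (-a - D) (-a), f x
          ≤ ∫⁻ _ in Ioc (-a - D) (-a), fa := by
            apply setLIntegral_mono measurable_const
            intro x hx
            exact pdf_mono v (by nlinarith [hx.1, hx.2])
        _ = fa * ENNReal.ofReal D := by
            rw [setLIntegral_const, Real.volume_Ioc]; ring_nf
        _ = ∫⁻ _ in Ioc (a - D) a, fa := by
            rw [setLIntegral_const, Real.volume_Ioc]; ring_nf
        _ ≤ ∫⁻ x in Ioc (a - D) a, f x := by
            apply setLIntegral_mono hm
            intro x hx
            exact pdf_mono v (by nlinarith [hx.1, hx.2])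
    exact add_le_add key le_rfl |>.trans_eq (by rw [add_comm])
  · have h1 : a - D ≤ -a := by linarith
    calc ∫⁻ x in Ioc (-a - D) (a - D), f x
        ≤ ∫⁻ _ in Ioc (-a - D) (a - D), fa := by
          apply setLIntegral_mono measurable_const
          intro x hx
          exact pdf_mono v (by nlinarith [hx.1, hx.2])
      _ = fa * ENNReal.ofReal (2 * a) := by
          rw [setLIntegral_const, Real.volume_Ioc]; ring_nf
      _ = ∫⁻ _ in Ioc (-a) a, fa := by
          rw [setLIntegral_const, Real.volume_Ioc]; ring_nf
      _ ≤ ∫⁻ x in Ioc (-a) a, f x := by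
          apply setLIntegral_mono hm
          intro x hx
          exact pdf_mono v (by nlinarith [hx.1, hx.2])

lemma oneD (hv : v ≠ 0) {D : ℝ} (hD : 0 ≤ D) (c : ℝ) :
    gaussianReal D v {x : ℝ | x ^ 2 ≤ c} ≤ gaussianReal 0 v {x : ℝ | x ^ 2 ≤ c} := by
  rcases lt_or_ge c 0 with hc | hc
  · have : {x : ℝ | x ^ 2 ≤ c} = ∅ := by
      ext x; simp only [mem_setOf_eq, mem_empty_iff_false, iff_false, not_le]
      exact hc.trans_le (sq_nonneg x)
    simp [this]
  · have ha : 0 ≤ Real.sqrt c := Real.sqrt_nonneg c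
    have hset : {x : ℝ | x ^ 2 ≤ c} = Icc (-Real.sqrt c) (Real.sqrt c) := by
      ext x
      rw [mem_setOf_eq, mem_Icc]
      constructor
      · intro h; exact abs_le.mp (Real.abs_le_sqrt h)
      · rintro ⟨h1, h2⟩; have := sq_le_sq' h1 h2; rwa [Real.sq_sqrt hc] at this
    rw [hset]
    have hmap : gaussianReal D v = (gaussianReal 0 v).map (· + D) := by
      rw [gaussianReal_map_add_const, zero_add]
    rw [hmap, Measure.map_apply (measurable_add_const D) measurableSet_Icc,
      preimage_add_const_Icc]
    exact shift_le hv ha hD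



lemma prod_gauss (hv : v ≠ 0) :
    (gaussianReal 0 v).prod (gaussianReal 0 v) =
      ((volume : Measure ℝ).prod volume).withDensity
        (fun z => gaussianPDF 0 v z.1 * gaussianPDF 0 v z.2) :=
  Measure.prod_eq fun s t hs ht => by
    rw [withDensity_apply _ (hs.prod ht), ← Measure.prod_restrict,
      lintegral_prod_mul (measurable_gaussianPDF 0 v).aemeasurable
        (measurable_gaussianPDF 0 v).aemeasurable,
      ← gaussianReal_apply 0 hv s, ← gaussianReal_apply 0 hv t]

lemma rho_polar (hv : v ≠ 0) (r θ : ℝ) :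
    gaussianPDFReal 0 v (r * cos θ) * gaussianPDFReal 0 v (r * sin θ) =
      (2 * π * (v : ℝ))⁻¹ * Real.exp (-(r ^ 2) / (2 * (v : ℝ))) := by
  have hv' : (0 : ℝ) < v := by positivity
  have h2v : (0 : ℝ) < 2 * π * v := by positivity
  have hsq : (r * cos θ) ^ 2 + (r * sin θ) ^ 2 = r ^ 2 := by
    rw [mul_pow, mul_pow, ← mul_add, cos_sq_add_sin_sq, mul_one]
  simp only [gaussianPDFReal, sub_zero]
  calc (√(2 * π * v))⁻¹ * rexp (-(r * cos θ) ^ 2 / (2 * v)) *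
        ((√(2 * π * v))⁻¹ * rexp (-(r * sin θ) ^ 2 / (2 * v)))
      = (√(2 * π * v))⁻¹ ^ 2 *
          (rexp (-(r * cos θ) ^ 2 / (2 * v)) * rexp (-(r * sin θ) ^ 2 / (2 * v))) := by ring
    _ = (2 * π * (v : ℝ))⁻¹ * rexp (-(r ^ 2) / (2 * (v : ℝ))) := by
        rw [← Real.exp_add, ← add_div, ← neg_add, hsq, inv_pow, Real.sq_sqrt h2v.le]

lemma r_integral (hv : v ≠ 0) {R : ℝ} (hR : 0 < R) :
    ∫ r in Set.Ioc 0 R, r * ((2 * π * (v : ℝ))⁻¹ * Real.exp (-(r ^ 2) / (2 * (v : ℝ)))) =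
      (2 * π)⁻¹ * (1 - Real.exp (-(R ^ 2) / (2 * (v : ℝ)))) := by
  have hv' : (0 : ℝ) < v := by positivity
  have hd : ∀ x : ℝ, HasDerivAt (fun r : ℝ => -(2 * π)⁻¹ * Real.exp (-(r ^ 2) / (2 * (v : ℝ))))
      (x * ((2 * π * (v : ℝ))⁻¹ * Real.exp (-(x ^ 2) / (2 * (v : ℝ))))) x := by
    intro x
    have h1 : HasDerivAt (fun r : ℝ => -(r ^ 2) / (2 * (v : ℝ))) (-(2 * x) / (2 * (v : ℝ))) x := by
      simpa using (hasDerivAt_pow 2 x).neg.div_const (2 * (v : ℝ))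
    have h2 := (h1.exp).const_mul (-(2 * π)⁻¹)
    refine h2.congr_deriv ?_
    have hπ := Real.pi_ne_zero
    field_simp
  have hcont : Continuous fun r : ℝ => r * ((2 * π * (v : ℝ))⁻¹ * Real.exp (-(r ^ 2) / (2 * (v : ℝ)))) := by
    fun_prop
  rw [← intervalIntegral.integral_of_le hR.le,
    intervalIntegral.integral_eq_sub_of_hasDerivAt (fun x _ => hd x) (hcont.intervalIntegrable 0 R)]
  simp only [ne_eq, OfNat.ofNat_ne_zero, not_false_eq_true, zero_pow, neg_zero, zero_div,
    Real.exp_zero, mul_one]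
  ring





lemma claim_eq (hv : v ≠ 0) {R : ℝ} (hR : 0 < R) :
    EqOn
      (fun p : ℝ × ℝ => p.1 •
        ({q : ℝ × ℝ | q.1 ^ 2 + q.2 ^ 2 ≤ R ^ 2}.indicator
          (fun q => gaussianPDFReal 0 v q.1 * gaussianPDFReal 0 v q.2) (polarCoord.symm p)))
      (fun p =>
        ((Set.Ioc 0 R).indicator
          (fun r => r * ((2 * π * (v : ℝ))⁻¹ * Real.exp (-(r ^ 2) / (2 * (v : ℝ))))) p.1)
        * (1 : ℝ))
      (Ioi (0:ℝ) ×ˢ Ioo (-π) π) := by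
  rintro ⟨r, θ⟩ ⟨hr, -⟩
  have hr' : (0:ℝ) < r := hr
  have hsymm : polarCoord.symm (r, θ) = (r * cos θ, r * sin θ) := rfl
  have hsq : (r * cos θ) ^ 2 + (r * sin θ) ^ 2 = r ^ 2 := by
    rw [mul_pow, mul_pow, ← mul_add, cos_sq_add_sin_sq, mul_one]
  simp only [hsymm, mul_one]
  by_cases hle : r ≤ R
  · have hmem : (r * cos θ, r * sin θ) ∈ {q : ℝ × ℝ | q.1 ^ 2 + q.2 ^ 2 ≤ R ^ 2} := by
      simp only [mem_setOf_eq, hsq]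
      exact pow_le_pow_left₀ hr'.le hle 2
    rw [indicator_of_mem hmem, indicator_of_mem (show r ∈ Set.Ioc 0 R from ⟨hr', hle⟩)]
    rw [show (r * cos θ, r * sin θ).1 = r * cos θ from rfl,
      show (r * cos θ, r * sin θ).2 = r * sin θ from rfl, rho_polar hv r θ]
    rfl
  · push_neg at hle
    have hnmem : (r * cos θ, r * sin θ) ∉ {q : ℝ × ℝ | q.1 ^ 2 + q.2 ^ 2 ≤ R ^ 2} := by
      simp only [mem_setOf_eq, hsq, not_le]
      exact pow_lt_pow_left₀ hle hR.le two_ne_zero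
    rw [indicator_of_notMem hnmem, indicator_of_notMem (fun h => absurd h.2 (not_le.mpr hle))]
    simp

lemma value (hv : v ≠ 0) {R : ℝ} (hR : 0 < R) :
    ((gaussianReal 0 v).prod (gaussianReal 0 v)) {p : ℝ × ℝ | p.1 ^ 2 + p.2 ^ 2 ≤ R ^ 2} =
      ENNReal.ofReal (1 - Real.exp (-(R ^ 2) / (2 * (v : ℝ)))) := by
  have hdisk : MeasurableSet {p : ℝ × ℝ | p.1 ^ 2 + p.2 ^ 2 ≤ R ^ 2} :=
    measurableSet_le (by fun_prop) measurable_const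
  set ρ : ℝ × ℝ → ℝ := fun p => gaussianPDFReal 0 v p.1 * gaussianPDFReal 0 v p.2 with hρ
  have hρ_int : Integrable ρ (volume : Measure (ℝ × ℝ)) := by
    rw [Measure.volume_eq_prod ℝ ℝ]
    exact (integrable_gaussianPDFReal 0 v).mul_prod (integrable_gaussianPDFReal 0 v)
  have h1 : ((gaussianReal 0 v).prod (gaussianReal 0 v)) {p : ℝ × ℝ | p.1 ^ 2 + p.2 ^ 2 ≤ R ^ 2} =
      ∫⁻ p in {p : ℝ × ℝ | p.1 ^ 2 + p.2 ^ 2 ≤ R ^ 2}, ENNReal.ofReal (ρ p) := by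
    rw [prod_gauss hv, ← Measure.volume_eq_prod ℝ ℝ, withDensity_apply _ hdisk]
    congr 1
    ext p
    rw [hρ, gaussianPDF_def, ENNReal.ofReal_mul (gaussianPDFReal_nonneg 0 v p.1)]
  rw [h1, ← ofReal_integral_eq_lintegral_ofReal hρ_int.integrableOn
      (ae_of_all _ fun p => mul_nonneg (gaussianPDFReal_nonneg 0 v p.1)
        (gaussianPDFReal_nonneg 0 v p.2))]
  congr 1
  rw [← integral_indicator hdisk, ← integral_comp_polarCoord_symm,
    show polarCoord.target = Ioi (0:ℝ) ×ˢ Ioo (-π) π from rfl,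
    setIntegral_congr_fun (measurableSet_Ioi.prod measurableSet_Ioo) (claim_eq hv hR),
    Measure.volume_eq_prod ℝ ℝ]
  have hprod : ∫ x in Ioi (0:ℝ) ×ˢ Ioo (-π) π,
      (Set.Ioc 0 R).indicator
        (fun r => r * ((2 * π * (v : ℝ))⁻¹ * Real.exp (-(r ^ 2) / (2 * (v : ℝ))))) x.1 * 1
        ∂((volume : Measure ℝ).prod volume) =
      (∫ r in Ioi (0:ℝ), (Set.Ioc 0 R).indicator
        (fun r => r * ((2 * π * (v : ℝ))⁻¹ * Real.exp (-(r ^ 2) / (2 * (v : ℝ))))) r) *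
      ∫ _ in Ioo (-π) π, (1:ℝ) :=
    setIntegral_prod_mul _ (fun _ => (1:ℝ)) _ _
  rw [hprod]
  have hθ : ∫ _ in Ioo (-π) π, (1:ℝ) = 2 * π := by
    rw [setIntegral_const, Real.volume_real_Ioo_of_le (by linarith [Real.pi_pos] : -π ≤ π),
      smul_eq_mul, mul_one]
    ring
  have hr : ∫ r in Ioi (0:ℝ),
      (Set.Ioc 0 R).indicator
        (fun r => r * ((2 * π * (v : ℝ))⁻¹ * Real.exp (-(r ^ 2) / (2 * (v : ℝ))))) r =
      (2 * π)⁻¹ * (1 - Real.exp (-(R ^ 2) / (2 * (v : ℝ)))) := by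
    rw [setIntegral_indicator measurableSet_Ioc,
      show Ioi (0:ℝ) ∩ Set.Ioc 0 R = Set.Ioc 0 R from
        Set.inter_eq_right.mpr Ioc_subset_Ioi_self,
      r_integral hv hR]
  rw [hθ, hr]
  have hπ : (π : ℝ) ≠ 0 := Real.pi_ne_zero
  field_simp

end PcAux

open MeasureTheory ProbabilityTheory

/-- The epistemic probability of collision: the probability assigned to the closed disk
of radius `R` centered at the origin in `ℝ²` by the bivariate normal distribution with
mean `(D, 0)` and covariance `S² · I₂` (the product of independent real Gaussians with
means `D` and `0` and common variance `S²`). -/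
noncomputable def Pc (D S R : ℝ) : ENNReal :=
  ((gaussianReal D (Real.toNNReal (S ^ 2))).prod (gaussianReal 0 (Real.toNNReal (S ^ 2))))
    {p : ℝ × ℝ | p.1 ^ 2 + p.2 ^ 2 ≤ R ^ 2}

/-- For fixed uncertainty `S` and combined radius `R`, the maximum epistemic probability
of collision over all estimated miss distances `D ≥ 0` is attained at `D = 0`, where it
equals `1 − exp(−R²/(2S²))`. -/
theorem Pc_le_Pc_zero (S R : ℝ) (hS : 0 < S) (hR : 0 < R) :
    (∀ D : ℝ, 0 ≤ D → Pc D S R ≤ Pc 0 S R) ∧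
      Pc 0 S R = ENNReal.ofReal (1 - Real.exp (-(R ^ 2) / (2 * S ^ 2))) := by
  have hvS : ((Real.toNNReal (S ^ 2)) : ℝ) = S ^ 2 := Real.coe_toNNReal _ (sq_nonneg S)
  have hv : Real.toNNReal (S ^ 2) ≠ 0 := by
    simp only [ne_eq, Real.toNNReal_eq_zero, not_le]
    positivity
  have hdisk : MeasurableSet {p : ℝ × ℝ | p.1 ^ 2 + p.2 ^ 2 ≤ R ^ 2} :=
    measurableSet_le (by fun_prop) measurable_const
  constructor
  · intro D hD
    unfold Pc
    rw [Measure.prod_apply_symm hdisk, Measure.prod_apply_symm hdisk]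
    refine lintegral_mono fun y => ?_
    have hset : ((fun x => (x, y)) ⁻¹' {p : ℝ × ℝ | p.1 ^ 2 + p.2 ^ 2 ≤ R ^ 2}) =
        {x : ℝ | x ^ 2 ≤ R ^ 2 - y ^ 2} := by
      ext x
      simp only [Set.mem_preimage, Set.mem_setOf_eq]
      constructor <;> intro h <;> linarith
    rw [hset]
    exact PcAux.oneD hv hD _
  · unfold Pc
    rw [PcAux.value hv hR, hvS]
end

section
/- For D ≥ 0, S > 0, R > 0, define Pc(D,S,R) as the probability assigned to the closed disk {(x,y) ∈ ℝ² : x² + y² ≤ R²} by the bivariate normal distribution with mean (D,0) and covariance S²·I₂. Then for each fixed S > 0 and R > 0, the function D ↦ Pc(D,S,R) is antitone (monotone nonincreasing) on [0,∞). -/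
open MeasureTheory ProbabilityTheory
open scoped NNReal

lemma gaussianPDFReal_zero_le {v : ℝ≥0} (hv : v ≠ 0) {a x : ℝ} (ha : 0 ≤ a) (hx : x ≤ a) :
    gaussianPDFReal 0 v (x - 2 * a) ≤ gaussianPDFReal 0 v x := by
  have hv' : 0 < (v : ℝ) := by exact_mod_cast hv.bot_lt
  simp only [gaussianPDFReal, sub_zero]
  apply mul_le_mul_of_nonneg_left _ (by positivity)
  rw [Real.exp_le_exp]
  apply div_le_div_of_nonneg_right _ (by positivity : (0:ℝ) ≤ 2 * ↑v)
  nlinarith [sq_nonneg (x - a)]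

lemma intervalIntegral_gaussian_mono {v : ℝ≥0} (hv : v ≠ 0) {a D1 D2 : ℝ} (ha : 0 ≤ a)
    (h1 : 0 ≤ D1) (h12 : D1 ≤ D2) :
    ∫ x in (-a)..a, gaussianPDFReal D2 v x ≤ ∫ x in (-a)..a, gaussianPDFReal D1 v x := by
  set f : ℝ → ℝ := gaussianPDFReal 0 v with hf
  set g : ℝ → ℝ := gaussianPDFReal (2 * a) v with hg
  have hpdf : ∀ D x : ℝ, gaussianPDFReal D v x = f (x - D) := by
    intro D x
    rw [hf, gaussianPDFReal_sub, zero_add]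
  have hgf : ∀ x : ℝ, g x = f (x - 2 * a) := fun x => hpdf (2 * a) x
  have hint : ∀ c d : ℝ, IntervalIntegrable f volume c d :=
    fun c d => (integrable_gaussianPDFReal 0 v).intervalIntegrable
  have hintg : ∀ c d : ℝ, IntervalIntegrable g volume c d :=
    fun c d => (integrable_gaussianPDFReal (2 * a) v).intervalIntegrable
  have htrans : ∀ D : ℝ, (∫ x in (-a)..a, gaussianPDFReal D v x)
      = ∫ x in (-a - D)..(a - D), f x := by
    intro D
    simp_rw [hpdf D]
    exact intervalIntegral.integral_comp_sub_right f D
  rw [htrans, htrans]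
  have h1' : (∫ x in (-a - D2)..(a - D2), f x) + ∫ x in (a - D2)..(a - D1), f x
      = ∫ x in (-a - D2)..(a - D1), f x :=
    intervalIntegral.integral_add_adjacent_intervals (hint _ _) (hint _ _)
  have h2' : (∫ x in (-a - D2)..(-a - D1), f x) + ∫ x in (-a - D1)..(a - D1), f x
      = ∫ x in (-a - D2)..(a - D1), f x :=
    intervalIntegral.integral_add_adjacent_intervals (hint _ _) (hint _ _)
  have hshift : (∫ x in (-a - D2)..(-a - D1), f x)
      = ∫ x in (a - D2)..(a - D1), g x := by
    simp_rw [hgf]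
    rw [intervalIntegral.integral_comp_sub_right f (2 * a)]
    congr 1 <;> ring
  have hkey : 0 ≤ ∫ x in (a - D2)..(a - D1), (f x - g x) := by
    apply intervalIntegral.integral_nonneg (by linarith)
    intro x hx
    have hxa : x ≤ a := le_trans hx.2 (by linarith)
    have h2 : g x ≤ f x := by
      rw [hgf x]
      exact gaussianPDFReal_zero_le (v := v) hv ha hxa
    linarith
  rw [intervalIntegral.integral_sub (hint _ _) (hintg _ _)] at hkey
  rw [← hshift] at hkey
  linarith

lemma gaussian_slice_mono {v : ℝ≥0} (hv : v ≠ 0) {D1 D2 : ℝ} (h1 : 0 ≤ D1) (h12 : D1 ≤ D2)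
    (y R : ℝ) :
    gaussianReal D2 v {x : ℝ | x ^ 2 + y ^ 2 ≤ R ^ 2}
      ≤ gaussianReal D1 v {x : ℝ | x ^ 2 + y ^ 2 ≤ R ^ 2} := by
  by_cases hc : R ^ 2 - y ^ 2 < 0
  · have : {x : ℝ | x ^ 2 + y ^ 2 ≤ R ^ 2} = (∅ : Set ℝ) := by
      ext x
      simp only [Set.mem_setOf_eq, Set.mem_empty_iff_false, iff_false]
      nlinarith [sq_nonneg x]
    simp [this]
  · push_neg at hc
    set a := Real.sqrt (R ^ 2 - y ^ 2) with hadef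
    have ha : 0 ≤ a := Real.sqrt_nonneg _
    have hset : {x : ℝ | x ^ 2 + y ^ 2 ≤ R ^ 2} = Set.Icc (-a) a := by
      ext x
      simp only [Set.mem_setOf_eq, Set.mem_Icc]
      rw [← abs_le]
      constructor
      · intro h
        have : x ^ 2 ≤ R ^ 2 - y ^ 2 := by linarith
        calc |x| = Real.sqrt (x ^ 2) := (Real.sqrt_sq_eq_abs x).symm
          _ ≤ a := Real.sqrt_le_sqrt this
      · intro h
        have hx2 : x ^ 2 ≤ a ^ 2 := by
          rw [← sq_abs]
          exact pow_le_pow_left₀ (abs_nonneg x) h 2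
        have ha2 : a ^ 2 = R ^ 2 - y ^ 2 := Real.sq_sqrt hc
        linarith
    rw [hset, gaussianReal_apply_eq_integral _ hv, gaussianReal_apply_eq_integral _ hv]
    apply ENNReal.ofReal_le_ofReal
    rw [integral_Icc_eq_integral_Ioc, integral_Icc_eq_integral_Ioc,
      ← intervalIntegral.integral_of_le (by linarith : -a ≤ a),
      ← intervalIntegral.integral_of_le (by linarith : -a ≤ a)]
    exact intervalIntegral_gaussian_mono hv ha h1 h12

/-- For fixed `S > 0` and `R > 0`, the epistemic probability of collision is a monotone
nonincreasing function of the estimated miss distance `D` on `[0, ∞)`. -/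
theorem Pc_antitoneOn (S R : ℝ) (hS : 0 < S) (hR : 0 < R) :
    AntitoneOn (fun D => Pc D S R) (Set.Ici (0 : ℝ)) := by
  intro D1 hD1 D2 hD2 h12
  have hv : (Real.toNNReal (S ^ 2)) ≠ 0 := by
    simp only [ne_eq, Real.toNNReal_eq_zero, not_le]
    positivity
  have hmeas : MeasurableSet {p : ℝ × ℝ | p.1 ^ 2 + p.2 ^ 2 ≤ R ^ 2} :=
    measurableSet_le (by fun_prop) measurable_const
  simp only [Pc]
  rw [MeasureTheory.Measure.prod_apply_symm hmeas, MeasureTheory.Measure.prod_apply_symm hmeas]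
  apply lintegral_mono
  intro y
  exact gaussian_slice_mono hv hD1 h12 y R
end

section
/- For D ≥ 0, S > 0, R > 0, define Pc(D,S,R) as the probability assigned to the closed disk {(x,y) ∈ ℝ² : x² + y² ≤ R²} by the bivariate normal distribution with mean (D,0) and covariance S²·I₂. Then for every fixed D > R > 0, there exists S* ∈ (0,∞) such that Pc(D,S*,R) ≥ Pc(D,S,R) for all S ∈ (0,∞); i.e., the function S ↦ Pc(D,S,R) attains a maximum at some finite positive uncertainty level. -/
open MeasureTheory ProbabilityTheory

namespace PcAux

open Real NNReal Filter Topology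

/-- The closed disk of radius `R` centered at the origin. -/
def disk (R : ℝ) : Set (ℝ × ℝ) := {p : ℝ × ℝ | p.1 ^ 2 + p.2 ^ 2 ≤ R ^ 2}

lemma measurableSet_disk (R : ℝ) : MeasurableSet (disk R) :=
  (isClosed_le (by fun_prop) continuous_const).measurableSet

lemma disk_subset (R : ℝ) : disk R ⊆ Set.Icc (-|R|) |R| ×ˢ Set.Icc (-|R|) |R| := by
  intro p hp
  have h : p.1 ^ 2 + p.2 ^ 2 ≤ R ^ 2 := hp
  have habs : R ^ 2 = |R| ^ 2 := (sq_abs R).symm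
  have hRnn : 0 ≤ |R| := abs_nonneg R
  have hRle : R ≤ |R| := le_abs_self R
  have hRge : -|R| ≤ R := neg_abs_le R
  constructor
  · constructor
    · nlinarith [sq_nonneg (p.1 + |R|), sq_nonneg p.2]
    · nlinarith [sq_nonneg (p.1 - |R|), sq_nonneg p.2]
  · constructor
    · nlinarith [sq_nonneg (p.2 + |R|), sq_nonneg p.1]
    · nlinarith [sq_nonneg (p.2 - |R|), sq_nonneg p.1]

lemma volume_disk_lt_top (R : ℝ) : volume (disk R) < ⊤ :=
  (measure_mono (disk_subset R)).trans_lt (isCompact_Icc.prod isCompact_Icc).measure_lt_top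

lemma volume_disk_pos {R : ℝ} (hR : 0 < R) : 0 < volume (disk R) := by
  have hsub : Set.Icc (0:ℝ) (R/2) ×ˢ Set.Icc (0:ℝ) (R/2) ⊆ disk R := by
    rintro p ⟨⟨h1, h2⟩, h3, h4⟩
    show p.1 ^ 2 + p.2 ^ 2 ≤ R ^ 2
    nlinarith
  refine lt_of_lt_of_le ?_ (measure_mono hsub)
  rw [Measure.volume_eq_prod, Measure.prod_prod, Real.volume_Icc]
  have : (0:ℝ) < R/2 - 0 := by linarith
  exact ENNReal.mul_pos (ENNReal.ofReal_pos.mpr this).ne' (ENNReal.ofReal_pos.mpr this).ne'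

/-- The joint density of the two independent gaussians. -/
noncomputable def gpdf (D S : ℝ) (p : ℝ × ℝ) : ℝ :=
  gaussianPDFReal D (Real.toNNReal (S ^ 2)) p.1 * gaussianPDFReal 0 (Real.toNNReal (S ^ 2)) p.2

lemma gpdf_nonneg (D S : ℝ) (p : ℝ × ℝ) : 0 ≤ gpdf D S p :=
  mul_nonneg (gaussianPDFReal_nonneg _ _ _) (gaussianPDFReal_nonneg _ _ _)

lemma measurable_gpdf (D S : ℝ) : Measurable (gpdf D S) :=
  ((measurable_gaussianPDFReal _ _).comp measurable_fst).mul
    ((measurable_gaussianPDFReal _ _).comp measurable_snd)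

lemma gpdf_eq (D : ℝ) {S : ℝ} (hS : 0 < S) (p : ℝ × ℝ) :
    gpdf D S p = (2 * π * S ^ 2)⁻¹ * rexp (-((p.1 - D) ^ 2 + p.2 ^ 2) / (2 * S ^ 2)) := by
  have hv : ((Real.toNNReal (S ^ 2) : ℝ≥0) : ℝ) = S ^ 2 := Real.coe_toNNReal _ (sq_nonneg S)
  have hA : (0:ℝ) ≤ 2 * π * S ^ 2 := by positivity
  unfold gpdf gaussianPDFReal
  rw [hv]
  rw [show ((√(2 * π * S ^ 2))⁻¹ * rexp (-(p.1 - D) ^ 2 / (2 * S ^ 2))) *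
      ((√(2 * π * S ^ 2))⁻¹ * rexp (-(p.2 - 0) ^ 2 / (2 * S ^ 2)))
      = (√(2 * π * S ^ 2) * √(2 * π * S ^ 2))⁻¹ *
        rexp (-(p.1 - D) ^ 2 / (2 * S ^ 2) + -(p.2 - 0) ^ 2 / (2 * S ^ 2)) by
    rw [Real.exp_add, mul_inv]; ring]
  rw [Real.mul_self_sqrt hA]
  congr 1
  ring

lemma gpdf_le {D S : ℝ} (hS : 0 < S) (p : ℝ × ℝ) : gpdf D S p ≤ (2 * π * S ^ 2)⁻¹ := by
  rw [gpdf_eq D hS p]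
  have he : rexp (-((p.1 - D) ^ 2 + p.2 ^ 2) / (2 * S ^ 2)) ≤ 1 := by
    rw [Real.exp_le_one_iff]
    apply div_nonpos_of_nonpos_of_nonneg
    · nlinarith [sq_nonneg (p.1 - D), sq_nonneg p.2]
    · positivity
  calc (2 * π * S ^ 2)⁻¹ * rexp (-((p.1 - D) ^ 2 + p.2 ^ 2) / (2 * S ^ 2))
      ≤ (2 * π * S ^ 2)⁻¹ * 1 := by
        apply mul_le_mul_of_nonneg_left he (by positivity)
    _ = (2 * π * S ^ 2)⁻¹ := mul_one _

lemma integrableOn_gpdf (D R : ℝ) {S : ℝ} (hS : 0 < S) :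
    IntegrableOn (gpdf D S) (disk R) volume := by
  apply Measure.integrableOn_of_bounded (volume_disk_lt_top R).ne
    (measurable_gpdf D S).aestronglyMeasurable
  filter_upwards with p
  rw [Real.norm_eq_abs, abs_of_nonneg (gpdf_nonneg D S p)]
  exact gpdf_le hS p

/-- The probability of collision as a real set integral. -/
lemma Pc_eq (D R : ℝ) {S : ℝ} (hS : 0 < S) :
    Pc D S R = ENNReal.ofReal (∫ p in disk R, gpdf D S p) := by
  have hvne : Real.toNNReal (S ^ 2) ≠ 0 := by
    simp only [ne_eq, Real.toNNReal_eq_zero, not_le]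
    positivity
  set v := Real.toNNReal (S ^ 2) with hv
  have hprod : (gaussianReal D v).prod (gaussianReal 0 v)
      = (volume : Measure (ℝ × ℝ)).withDensity
        (fun p => gaussianPDF D v p.1 * gaussianPDF 0 v p.2) := by
    refine Measure.prod_eq fun s t hs ht => ?_
    rw [withDensity_apply _ (hs.prod ht), Measure.volume_eq_prod, ← Measure.prod_restrict,
      lintegral_prod_mul (measurable_gaussianPDF _ _).aemeasurable
        (measurable_gaussianPDF _ _).aemeasurable,
      gaussianReal_apply _ hvne, gaussianReal_apply _ hvne]
  have hPc : Pc D S R = ∫⁻ p in disk R, ENNReal.ofReal (gpdf D S p) := by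
    rw [Pc, ← hv, hprod,
      show {p : ℝ × ℝ | p.1 ^ 2 + p.2 ^ 2 ≤ R ^ 2} = disk R from rfl,
      withDensity_apply _ (measurableSet_disk R)]
    refine setLIntegral_congr_fun (measurableSet_disk R) (fun p _ => ?_)
    rw [gpdf, ENNReal.ofReal_mul (gaussianPDFReal_nonneg _ _ _)]
    rfl
  rw [hPc, ofReal_integral_eq_lintegral_ofReal (integrableOn_gpdf D R hS)
    (ae_of_all _ fun p => gpdf_nonneg D S p)]

/-- The real-valued collision probability. -/
noncomputable def F (D R S : ℝ) : ℝ := ∫ p in disk R, gpdf D S p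

lemma F_nonneg (D R S : ℝ) : 0 ≤ F D R S :=
  setIntegral_nonneg (measurableSet_disk R) fun p _ => gpdf_nonneg D S p

lemma F_le_of_bound (D R : ℝ) {S C : ℝ} (hC : 0 ≤ C)
    (hb : ∀ p ∈ disk R, gpdf D S p ≤ C) :
    F D R S ≤ C * (volume (disk R)).toReal := by
  refine (le_abs_self _).trans ?_
  rw [← Real.norm_eq_abs]
  refine norm_setIntegral_le_of_norm_le_const (volume_disk_lt_top R)
    fun p hp => ?_
  rw [Real.norm_eq_abs, abs_of_nonneg (gpdf_nonneg D S p)]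
  exact hb p hp

lemma continuousAt_F (D R : ℝ) {S₀ : ℝ} (hS₀ : 0 < S₀) : ContinuousAt (F D R) S₀ := by
  have hhalf : (0:ℝ) < S₀ / 2 := by linarith
  refine continuousAt_of_dominated (bound := fun _ => (2 * π * (S₀/2) ^ 2)⁻¹)
    (Eventually.of_forall fun S => (measurable_gpdf D S).aestronglyMeasurable.restrict) ?_ ?_ ?_
  · filter_upwards [eventually_gt_nhds (show S₀ / 2 < S₀ by linarith)] with S hS
    filter_upwards with p
    have hSpos : 0 < S := lt_trans hhalf hS
    rw [Real.norm_eq_abs, abs_of_nonneg (gpdf_nonneg D S p)]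
    refine (gpdf_le hSpos p).trans ?_
    apply inv_anti₀ (by positivity)
    have : (S₀/2) ^ 2 ≤ S ^ 2 := by nlinarith
    nlinarith [Real.pi_pos]
  · exact (integrableOn_const (volume_disk_lt_top R).ne :
      IntegrableOn (fun _ => (2 * π * (S₀ / 2) ^ 2)⁻¹) (disk R) volume)
  · filter_upwards with p
    have hcont : ContinuousAt
        (fun S => (2 * π * S ^ 2)⁻¹ * rexp (-((p.1 - D) ^ 2 + p.2 ^ 2) / (2 * S ^ 2))) S₀ := by
      have h1 : (2 * π * S₀ ^ 2) ≠ 0 := by positivity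
      have h2 : (2 * S₀ ^ 2) ≠ 0 := by positivity
      exact ((continuousAt_const.mul ((continuous_pow 2).continuousAt)).inv₀ h1).mul
        (Real.continuous_exp.continuousAt.comp
          (continuousAt_const.div (continuousAt_const.mul ((continuous_pow 2).continuousAt)) h2))
    refine hcont.congr ?_
    filter_upwards [eventually_gt_nhds hS₀] with S hS
    exact (gpdf_eq D hS p).symm

lemma tendsto_F_atTop (D R : ℝ) : Tendsto (F D R) atTop (𝓝 0) := by
  have hbound : ∀ᶠ S in atTop, F D R S ≤ (2 * π * S ^ 2)⁻¹ * (volume (disk R)).toReal := by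
    filter_upwards [eventually_gt_atTop (0:ℝ)] with S hS
    exact F_le_of_bound D R (by positivity) fun p _ => gpdf_le hS p
  have hlim : Tendsto (fun S : ℝ => (2 * π * S ^ 2)⁻¹ * (volume (disk R)).toReal)
      atTop (𝓝 0) := by
    rw [show (0:ℝ) = 0 * (volume (disk R)).toReal by ring]
    refine Tendsto.mul_const _ ?_
    refine tendsto_inv_atTop_zero.comp ?_
    exact (tendsto_pow_atTop two_ne_zero).const_mul_atTop (by positivity)
  exact squeeze_zero' (Eventually.of_forall fun S => F_nonneg D R S) hbound hlim

lemma tendsto_F_zero (D R : ℝ) (hR : 0 < R) (hD : R < D) :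
    Tendsto (F D R) (𝓝[>] 0) (𝓝 0) := by
  set δ : ℝ := D - R with hδ
  have hδpos : 0 < δ := by simp [hδ]; linarith
  set V : ℝ := (volume (disk R)).toReal with hV
  have hVnn : 0 ≤ V := ENNReal.toReal_nonneg
  -- Upper bound on the disk
  have hbound : ∀ S : ℝ, 0 < S →
      F D R S ≤ (2 * π * S ^ 2)⁻¹ * rexp (-(δ ^ 2) / (2 * S ^ 2)) * V := by
    intro S hS
    refine F_le_of_bound D R (by positivity) fun p hp => ?_
    rw [gpdf_eq D hS p]
    have h : p.1 ^ 2 + p.2 ^ 2 ≤ R ^ 2 := hp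
    have hx : p.1 ≤ R := by nlinarith [sq_nonneg (p.1 - R), sq_nonneg p.2]
    have hsq : δ ^ 2 ≤ (p.1 - D) ^ 2 + p.2 ^ 2 := by
      nlinarith [mul_nonneg (sub_nonneg.2 hx) (show (0:ℝ) ≤ 2*D - p.1 - R by linarith),
        sq_nonneg p.2]
    have he : rexp (-((p.1 - D) ^ 2 + p.2 ^ 2) / (2 * S ^ 2)) ≤ rexp (-(δ ^ 2) / (2 * S ^ 2)) := by
      apply Real.exp_le_exp.2
      apply div_le_div_of_nonneg_right ?_ (by positivity)
      · linarith
    exact mul_le_mul_of_nonneg_left he (by positivity)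
  -- The limit of the bound
  set c : ℝ := δ ^ 2 / 2 with hc
  have hcpos : 0 < c := by positivity
  have hg : Tendsto (fun u : ℝ => V / (2 * π) / c * (c * u * rexp (-(c * u)))) atTop (𝓝 0) := by
    rw [show (0:ℝ) = V / (2 * π) / c * 0 by ring]
    refine Tendsto.const_mul _ ?_
    have h1 : Tendsto (fun x : ℝ => x ^ 1 * rexp (-x)) atTop (𝓝 0) :=
      Real.tendsto_pow_mul_exp_neg_atTop_nhds_zero 1
    have h2 : Tendsto (fun u : ℝ => c * u) atTop atTop :=
      tendsto_id.const_mul_atTop hcpos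
    exact (h1.comp h2).congr fun u => by simp [pow_one]
  have hu : Tendsto (fun S : ℝ => (S ^ 2)⁻¹) (𝓝[>] 0) atTop := by
    refine tendsto_inv_nhdsGT_zero.comp ?_
    refine tendsto_nhdsWithin_of_tendsto_nhds_of_eventually_within _ ?_ ?_
    · have : Tendsto (fun S : ℝ => S ^ 2) (𝓝 0) (𝓝 (0 ^ 2)) :=
        (continuous_pow 2).continuousAt
      simpa using this.mono_left nhdsWithin_le_nhds
    · filter_upwards [self_mem_nhdsWithin] with S (hS : 0 < S)
      exact Set.mem_Ioi.2 (by positivity)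
  have hlim : Tendsto (fun S : ℝ => (2 * π * S ^ 2)⁻¹ * rexp (-(δ ^ 2) / (2 * S ^ 2)) * V)
      (𝓝[>] 0) (𝓝 0) := by
    refine ((hg.comp hu).congr' ?_)
    filter_upwards [self_mem_nhdsWithin] with S (hS : 0 < S)
    have hS2 : (S:ℝ) ^ 2 ≠ 0 := by positivity
    show V / (2 * π) / c * (c * (S ^ 2)⁻¹ * rexp (-(c * (S ^ 2)⁻¹)))
        = (2 * π * S ^ 2)⁻¹ * rexp (-(δ ^ 2) / (2 * S ^ 2)) * V
    have hexp : -(c * (S ^ 2)⁻¹) = -(δ ^ 2) / (2 * S ^ 2) := by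
      rw [hc]; field_simp
    rw [hexp]
    have hc0 : c ≠ 0 := hcpos.ne'
    field_simp
  refine squeeze_zero' (Eventually.of_forall fun S => F_nonneg D R S) ?_ hlim
  filter_upwards [self_mem_nhdsWithin] with S (hS : 0 < S)
  exact hbound S hS

lemma F_one_pos (D R : ℝ) (hR : 0 < R) (hD : R < D) : 0 < F D R 1 := by
  have hDpos : 0 < D := lt_trans hR hD
  set c : ℝ := (2 * π)⁻¹ * rexp (-((R + D) ^ 2 + R ^ 2) / 2) with hc
  have hcpos : 0 < c := by positivity
  have hlb : ∀ p ∈ disk R, c ≤ gpdf D 1 p := by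
    intro p hp
    have h : p.1 ^ 2 + p.2 ^ 2 ≤ R ^ 2 := hp
    have hx1 : p.1 ≤ R := by nlinarith [sq_nonneg (p.1 - R), sq_nonneg p.2]
    have hx2 : -R ≤ p.1 := by nlinarith [sq_nonneg (p.1 + R), sq_nonneg p.2]
    have hy : p.2 ^ 2 ≤ R ^ 2 := by nlinarith [sq_nonneg p.1]
    rw [gpdf_eq D one_pos p]
    have hsq : (p.1 - D) ^ 2 + p.2 ^ 2 ≤ (R + D) ^ 2 + R ^ 2 := by nlinarith
    have he : rexp (-((R + D) ^ 2 + R ^ 2) / 2) ≤ rexp (-((p.1 - D) ^ 2 + p.2 ^ 2) / 2) := by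
      apply Real.exp_le_exp.2
      apply div_le_div_of_nonneg_right ?_ (by norm_num)
      · linarith
    simp only [one_pow, mul_one]
    rw [hc]
    exact mul_le_mul_of_nonneg_left he (by positivity)
  have hVpos : 0 < (volume (disk R)).toReal :=
    ENNReal.toReal_pos (volume_disk_pos hR).ne' (volume_disk_lt_top R).ne
  have := setIntegral_ge_of_const_le_real (measurableSet_disk R) (volume_disk_lt_top R).ne hlb
    (integrableOn_gpdf D R one_pos)
  calc (0:ℝ) < c * (volume (disk R)).toReal := by positivity
    _ ≤ ∫ p in disk R, gpdf D 1 p := this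
    _ = F D R 1 := rfl

end PcAux

/-- For a fixed estimated miss distance exceeding the combined radius (`D > R > 0`),
the epistemic probability of collision, as a function of the uncertainty `S`, attains a
maximum at some finite positive uncertainty level `S*`. -/
theorem Pc_exists_max_over_S (D R : ℝ) (hR : 0 < R) (hD : R < D) :
    ∃ Sstar ∈ Set.Ioi (0 : ℝ), ∀ S ∈ Set.Ioi (0 : ℝ), Pc D S R ≤ Pc D Sstar R := by
  classical
  set F := PcAux.F D R with hF
  have hF1 : 0 < F 1 := PcAux.F_one_pos D R hR hD
  -- small S: eventually F S < F 1
  have h0 : ∀ᶠ S in nhdsWithin 0 (Set.Ioi 0), F S < F 1 :=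
    (PcAux.tendsto_F_zero D R hR hD).eventually (gt_mem_nhds hF1)
  obtain ⟨a, ha, hIoo⟩ := mem_nhdsGT_iff_exists_Ioo_subset.1 h0
  have ha0 : (0:ℝ) < a := ha
  -- large S: eventually F S < F 1
  obtain ⟨b, hb⟩ := (Filter.eventually_atTop).1
    ((PcAux.tendsto_F_atTop D R).eventually (gt_mem_nhds hF1))
  set lo : ℝ := min (a / 2) 1 with hlo
  set hi : ℝ := max b 1 with hhi
  have hlopos : 0 < lo := lt_min (by linarith) one_pos
  have hlo1 : lo ≤ 1 := min_le_right _ _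
  have hhi1 : (1:ℝ) ≤ hi := le_max_right _ _
  have hIcc : IsCompact (Set.Icc lo hi) := isCompact_Icc
  have hne : (Set.Icc lo hi).Nonempty := ⟨1, hlo1, hhi1⟩
  have hcont : ContinuousOn F (Set.Icc lo hi) := fun S hS =>
    (PcAux.continuousAt_F D R (lt_of_lt_of_le hlopos hS.1)).continuousWithinAt
  obtain ⟨Sstar, hSstar, hmax⟩ := hIcc.exists_isMaxOn hne hcont
  have hSstarpos : 0 < Sstar := lt_of_lt_of_le hlopos hSstar.1
  have hF1le : F 1 ≤ F Sstar := hmax ⟨hlo1, hhi1⟩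
  refine ⟨Sstar, hSstarpos, fun S hS => ?_⟩
  have hSpos : 0 < S := hS
  have hFle : F S ≤ F Sstar := by
    by_cases h1 : S < lo
    · have : S ∈ Set.Ioo 0 a := ⟨hSpos, by
        have := min_le_left (a/2) 1
        have : S < a / 2 := lt_of_lt_of_le h1 (min_le_left _ _)
        linarith⟩
      exact le_trans (le_of_lt (hIoo this)) hF1le
    · by_cases h2 : hi < S
      · have : F S < F 1 := hb S (le_of_lt (lt_of_le_of_lt (le_max_left b 1) h2))
        exact le_trans this.le hF1le
      · exact hmax ⟨not_lt.1 h1, not_lt.1 h2⟩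
  rw [PcAux.Pc_eq D R hSpos, PcAux.Pc_eq D R hSstarpos]
  exact ENNReal.ofReal_le_ofReal hFle
end

section
/- For D ≥ 0, S > 0, R > 0, define Pc(D,S,R) as the probability assigned to the closed disk {(x,y) ∈ ℝ² : x² + y² ≤ R²} by the bivariate normal distribution with mean (D,0) and covariance S²·I₂. If S ≥ 10·R, then for every D ≥ 0, Pc(D,S,R) ≤ 1/200 = 0.005. -/
open MeasureTheory ProbabilityTheory

open Real in
/-- Pointwise bound on the gaussian density. -/
lemma gaussianPDF_le (μ : ℝ) (v : NNReal) (x : ℝ) :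
    gaussianPDF μ v x ≤ ENNReal.ofReal ((Real.sqrt (2 * π * v))⁻¹) := by
  rw [gaussianPDF]
  apply ENNReal.ofReal_le_ofReal
  rw [gaussianPDFReal]
  have h1 : rexp (- (x - μ)^2 / (2 * v)) ≤ 1 := by
    rw [Real.exp_le_one_iff]
    have hv : (0:ℝ) ≤ v := v.2
    have : (0:ℝ) ≤ (x - μ)^2 := sq_nonneg _
    rcases eq_or_lt_of_le hv with h | h
    · simp [← h]
    · apply div_nonpos_of_nonpos_of_nonneg <;> nlinarith
  have h2 : (0:ℝ) ≤ (√(2 * π * v))⁻¹ := by positivity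
  calc (√(2 * π * v))⁻¹ * rexp (- (x - μ)^2 / (2 * v)) ≤ (√(2 * π * v))⁻¹ * 1 :=
        mul_le_mul_of_nonneg_left h1 h2
    _ = _ := mul_one _

/-- Area of the closed disk of radius `R` in `ℝ × ℝ`. -/
lemma volume_disk (R : ℝ) (hR : 0 ≤ R) :
    (volume : Measure (ℝ × ℝ)) {p : ℝ × ℝ | p.1 ^ 2 + p.2 ^ 2 ≤ R ^ 2}
      = ENNReal.ofReal (Real.pi * R ^ 2) := by
  have hmeas : MeasurableSet {p : ℝ × ℝ | p.1 ^ 2 + p.2 ^ 2 ≤ R ^ 2} :=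
    measurableSet_le (by fun_prop) measurable_const
  rw [← Complex.volume_preserving_equiv_real_prod.measure_preimage hmeas.nullMeasurableSet]
  have hpre : Complex.measurableEquivRealProd ⁻¹' {p : ℝ × ℝ | p.1 ^ 2 + p.2 ^ 2 ≤ R ^ 2}
      = Metric.closedBall (0 : ℂ) R := by
    ext z
    simp only [Set.mem_preimage, Complex.measurableEquivRealProd_apply, Set.mem_setOf_eq,
      Metric.mem_closedBall, Complex.dist_eq, sub_zero]
    rw [show z.re ^ 2 + z.im ^ 2 = ‖z‖ ^ 2 by
          rw [Complex.sq_norm, Complex.normSq_apply]; ring]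
    exact pow_le_pow_iff_left₀ (norm_nonneg z) hR (by norm_num)
  rw [hpre, Complex.volume_closedBall]
  rw [ENNReal.ofReal_mul Real.pi_pos.le, ← ENNReal.ofReal_pow hR, mul_comm]
  congr 1
  rw [← NNReal.coe_real_pi, ENNReal.ofReal_coe_nnreal]

/-- Key bound: a measure with density bounded by `C` assigns to a set at most `C` times
its Lebesgue measure, together with product structure. -/
theorem Pc_le_of_large_uncertainty (S R : ℝ) (hR : 0 < R) (hS : 10 * R ≤ S) :
    ∀ D : ℝ, 0 ≤ D → Pc D S R ≤ 1 / 200 := by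
  intro D _
  have hSpos : 0 < S := lt_of_lt_of_le (by linarith) hS
  set v : NNReal := Real.toNNReal (S ^ 2) with hv
  have hvne : v ≠ 0 := by
    simp [hv, Real.toNNReal_eq_zero, not_le]
    positivity
  set C : ENNReal := ENNReal.ofReal ((Real.sqrt (2 * Real.pi * v))⁻¹) with hC
  set s : Set (ℝ × ℝ) := {p : ℝ × ℝ | p.1 ^ 2 + p.2 ^ 2 ≤ R ^ 2} with hs
  have hmeas : MeasurableSet s := measurableSet_le (by fun_prop) measurable_const
  have key : Pc D S R ≤ C * C * ENNReal.ofReal (Real.pi * R ^ 2) := by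
    rw [Pc, gaussianReal_of_var_ne_zero D hvne, gaussianReal_of_var_ne_zero 0 hvne]
    rw [Measure.prod_apply hmeas]
    have step1 : ∀ x : ℝ,
        (volume.withDensity (gaussianPDF 0 v)) (Prod.mk x ⁻¹' s)
          ≤ C * volume (Prod.mk x ⁻¹' s) := by
      intro x
      have hms : MeasurableSet (Prod.mk x ⁻¹' s) := measurable_prodMk_left hmeas
      rw [withDensity_apply _ hms]
      calc ∫⁻ y in Prod.mk x ⁻¹' s, gaussianPDF 0 v y
          ≤ ∫⁻ _ in Prod.mk x ⁻¹' s, C := lintegral_mono fun y => gaussianPDF_le 0 v y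
        _ = C * volume (Prod.mk x ⁻¹' s) := by rw [setLIntegral_const]
    have hg : Measurable fun x => volume (Prod.mk x ⁻¹' s) :=
      measurable_measure_prodMk_left hmeas
    calc ∫⁻ x, (volume.withDensity (gaussianPDF 0 v)) (Prod.mk x ⁻¹' s)
            ∂(volume.withDensity (gaussianPDF D v))
        ≤ ∫⁻ x, C * volume (Prod.mk x ⁻¹' s) ∂(volume.withDensity (gaussianPDF D v)) :=
          lintegral_mono step1
      _ = ∫⁻ x, gaussianPDF D v x * (C * volume (Prod.mk x ⁻¹' s)) ∂volume := by
          rw [lintegral_withDensity_eq_lintegral_mul _ (measurable_gaussianPDF D v)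
            (hg.const_mul C)]
          rfl
      _ ≤ ∫⁻ x, C * (C * volume (Prod.mk x ⁻¹' s)) ∂volume :=
          lintegral_mono fun x => mul_le_mul_left (gaussianPDF_le D v x) _
      _ = C * C * ∫⁻ x, volume (Prod.mk x ⁻¹' s) ∂volume := by
          rw [lintegral_const_mul _ (hg.const_mul C), lintegral_const_mul _ hg, mul_assoc]
      _ = C * C * ENNReal.ofReal (Real.pi * R ^ 2) := by
          rw [← Measure.prod_apply hmeas, ← Measure.volume_eq_prod ℝ ℝ, hs, volume_disk R hR.le]
  refine key.trans ?_
  have hsqrt : Real.sqrt (2 * Real.pi * v) = S * Real.sqrt (2 * Real.pi) := by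
    have hvval : (v : ℝ) = S ^ 2 := Real.coe_toNNReal _ (by positivity)
    rw [hvval, mul_comm (2 * Real.pi), Real.sqrt_mul (by positivity), Real.sqrt_sq hSpos.le]
  have hCC : C * C * ENNReal.ofReal (Real.pi * R ^ 2)
      = ENNReal.ofReal (R ^ 2 / (2 * S ^ 2)) := by
    rw [hC, hsqrt, ← ENNReal.ofReal_mul (by positivity), ← ENNReal.ofReal_mul (by positivity)]
    congr 1
    have h2pi : Real.sqrt (2 * Real.pi) ^ 2 = 2 * Real.pi :=
      Real.sq_sqrt (by positivity)
    have hpi : Real.pi ≠ 0 := Real.pi_ne_zero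
    have h2 : Real.sqrt 2 * Real.sqrt 2 = 2 := Real.mul_self_sqrt (by norm_num)
    have hp2 : Real.sqrt Real.pi * Real.sqrt Real.pi = Real.pi :=
      Real.mul_self_sqrt Real.pi_pos.le
    field_simp
    linear_combination (-1 : ℝ) * h2pi
  rw [hCC]
  have hfrac : R ^ 2 / (2 * S ^ 2) ≤ 1 / 200 := by
    rw [div_le_div_iff₀ (by positivity) (by norm_num)]
    nlinarith
  calc ENNReal.ofReal (R ^ 2 / (2 * S ^ 2)) ≤ ENNReal.ofReal (1 / 200) :=
        ENNReal.ofReal_le_ofReal hfrac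
    _ = 1 / 200 := by
        rw [ENNReal.ofReal_div_of_pos (by norm_num)]
        norm_num
end
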